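/- arXiv:0901.0574 — 2 statements merged into one kernel-verified Lean document; each statement's English description precedes it below -/
import Mathlib

section
/- Let μ¹, μ² be Borel probability measures on Σ = I × I that disintegrate along vertical leaves as μⁱ(A) = ∫_{γ∈I} μⁱ_γ(A ∩ γ) dμⁱ_x with μⁱ_x absolutely continuous with respect to Lebesgue. If (1) W₁(μ¹_γ, μ²_γ) ≤ ε for almost every leaf γ, and (2) sup_{‖h‖_∞ ≤ 1} |∫h dμ¹_x − ∫h dμ²_x| ≤ δ, then W₁(μ¹, μ²) ≤ ε + δ. -/
open MeasureTheory

/-- The unit interval `I = [-1/2, 1/2]`. -/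
abbrev II : Set ℝ := Set.Icc (-(1 : ℝ) / 2) (1 / 2)

/-- Lebesgue measure on the interval `I`, as a measure on the subtype. -/
noncomputable def volII : Measure II := (volume : Measure ℝ).comap Subtype.val

/-- The Wasserstein-Kantorovich distance defined by duality with 1-Lipschitz test functions. -/
noncomputable def W1 {Y : Type*} [MetricSpace Y] [MeasurableSpace Y]
    (μ ν : Measure Y) : ℝ :=
  sSup {x : ℝ | ∃ g : Y → ℝ, LipschitzWith 1 g ∧ x = |∫ y, g y ∂μ - ∫ y, g y ∂ν|}

/-!
Nothing is assumed about how the leaf measures depend on the leaf, so the leafwise integrals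
`Φ a = ∫ g(a, ·) dμⁱ_a` need not be measurable, and the disintegration identity only holds for
lower Lebesgue integrals. Applied to both `f` and `c - f` for a bounded `f ≥ 0`, it still shows
that the lower integral of `Φ` is exact. This yields a measurable minorant `ψ` of the leafwise
integrals of `μ¹` and a measurable majorant `φ` of those of `μ²`, both with the same total
integral as `g`. For a 1-Lipschitz `g` vanishing at the centre, so that `|g| ≤ 1`,
`∫ g dμ¹ = ∫ ψ dμ¹_x ≤ ∫ ψ dμ²_x + δ ≤ ∫ φ dμ²_x + ε + δ = ∫ g dμ² + ε + δ`,
where `ψ ≤ φ + ε` holds on Lebesgue-almost every leaf, hence `μ²_x`-almost everywhere.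
-/

section Wasserstein

variable {Y : Type*} [MetricSpace Y] [MeasurableSpace Y] [OpensMeasurableSpace Y]
  [BoundedSpace Y] {μ ν : Measure Y}

lemma LipschitzWith.integrable_of_boundedSpace [IsFiniteMeasure μ] {K : NNReal} {g : Y → ℝ}
    (hg : LipschitzWith K g) : Integrable g μ := by
  obtain ⟨C, hC⟩ := (hg.isBounded_image (Bornology.isBounded_univ.2 ‹_›)).exists_norm_le
  exact .of_bound hg.continuous.aestronglyMeasurable C
    (ae_of_all _ fun y => hC _ (Set.mem_image_of_mem g trivial))

lemma bddAbove_W1_set [IsProbabilityMeasure μ] [IsProbabilityMeasure ν] :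
    BddAbove {x : ℝ | ∃ g : Y → ℝ, LipschitzWith 1 g ∧ x = |∫ y, g y ∂μ - ∫ y, g y ∂ν|} := by
  obtain ⟨C, hC⟩ := Metric.boundedSpace_iff.1 ‹_›
  obtain ⟨y₀⟩ := nonempty_of_isProbabilityMeasure μ
  have hmean : ∀ (ρ : Measure Y) [IsProbabilityMeasure ρ] {g : Y → ℝ}, LipschitzWith 1 g →
      |∫ y, g y ∂ρ - g y₀| ≤ C := by
    intro ρ _ g hg
    have hdev : ∀ y, ‖g y - g y₀‖ ≤ C := fun y => by
      simpa [← Real.dist_eq] using (hg.dist_le_mul y y₀).trans (by simpa using hC y y₀)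
    simpa [integral_sub hg.integrable_of_boundedSpace (integrable_const _)] using
      norm_integral_le_of_norm_le_const (μ := ρ) (ae_of_all _ hdev)
  refine ⟨C + C, ?_⟩
  rintro _ ⟨g, hg, rfl⟩
  calc |∫ y, g y ∂μ - ∫ y, g y ∂ν| = |(∫ y, g y ∂μ - g y₀) - (∫ y, g y ∂ν - g y₀)| := by
        ring_nf
    _ ≤ C + C := (abs_sub _ _).trans (add_le_add (hmean μ hg) (hmean ν hg))

lemma integral_sub_integral_le_W1 [IsProbabilityMeasure μ] [IsProbabilityMeasure ν] {g : Y → ℝ}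
    (hg : LipschitzWith 1 g) : ∫ y, g y ∂μ - ∫ y, g y ∂ν ≤ W1 μ ν :=
  (le_abs_self _).trans (le_csSup bddAbove_W1_set ⟨g, hg, rfl⟩)

lemma W1_le_of_forall_integral_sub_le [IsProbabilityMeasure μ] [IsProbabilityMeasure ν] (y₀ : Y)
    {c : ℝ}
    (h : ∀ g : Y → ℝ, LipschitzWith 1 g → g y₀ = 0 → ∫ y, g y ∂μ - ∫ y, g y ∂ν ≤ c) :
    W1 μ ν ≤ c := by
  refine csSup_le ⟨_, 0, LipschitzWith.const' 0, rfl⟩ ?_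
  rintro _ ⟨g, hg, rfl⟩
  set g₀ : Y → ℝ := fun y => g y - g y₀
  have hg₀ : LipschitzWith 1 g₀ := .of_dist_le_mul fun x y => by
    simpa [g₀, dist_sub_right] using hg.dist_le_mul x y
  have hneg : LipschitzWith 1 (-g₀) := .of_dist_le_mul fun x y => by
    simpa using hg₀.dist_le_mul x y
  have hshift : ∫ y, g₀ y ∂μ - ∫ y, g₀ y ∂ν = ∫ y, g y ∂μ - ∫ y, g y ∂ν := by
    simp [g₀, integral_sub hg.integrable_of_boundedSpace (integrable_const _)]
  rw [← hshift, abs_le]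
  constructor
  · simpa [integral_neg] using h (-g₀) hneg (by simp [g₀])
  · exact h g₀ hg₀ (by simp [g₀])

end Wasserstein

lemma integrable_of_abs_le {γ : Type*} [MeasurableSpace γ] {ρ : Measure γ} [IsFiniteMeasure ρ]
    {u : γ → ℝ} (hu : Measurable u) {C : ℝ} (huC : ∀ x, |u x| ≤ C) : Integrable u ρ :=
  .of_bound hu.aestronglyMeasurable C (ae_of_all _ huC)

lemma integral_eq_toReal_lintegral_ofReal_add_sub {γ : Type*} [MeasurableSpace γ]
    {ρ : Measure γ} [IsProbabilityMeasure ρ] {u : γ → ℝ} (hu : Measurable u) {C : ℝ}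
    (huC : ∀ x, |u x| ≤ C) :
    ∫ x, u x ∂ρ = (∫⁻ x, ENNReal.ofReal (u x + C) ∂ρ).toReal - C := by
  have hnonneg : ∀ x, 0 ≤ u x + C := fun x => by linarith [neg_abs_le (u x), huC x]
  rw [← integral_eq_lintegral_of_nonneg_ae (ae_of_all _ hnonneg)
    (hu.add_const C).aestronglyMeasurable, integral_add (integrable_of_abs_le hu huC)
    (integrable_const C)]
  simp

section Disintegration

variable {α β : Type*} [MeasurableSpace α] [MeasurableSpace β]

/-- The leaf measures `κ a` need not depend measurably on `a`, so the outer `∫⁻` is in general a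
lower Lebesgue integral of a non-measurable function. -/
def IsDisintegration (μ : Measure (α × β)) (ν : Measure α) (κ : α → Measure β) : Prop :=
  ∀ A, MeasurableSet A → μ A = ∫⁻ a, κ a (Prod.mk a ⁻¹' A) ∂ν

namespace IsDisintegration

variable {μ : Measure (α × β)} {ν : Measure α} {κ : α → Measure β}

lemma lintegral_le (h : IsDisintegration μ ν κ) {f : α × β → ENNReal} (hf : Measurable f) :
    ∫⁻ p, f p ∂μ ≤ ∫⁻ a, ∫⁻ b, f (a, b) ∂κ a ∂ν := by
  refine hf.ennreal_induction (fun c s hs => ?_) (fun f g _ hf _ hf_le hg_le => ?_)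
    (fun f hf hmono hf_le => ?_)
  · calc ∫⁻ p, s.indicator (fun _ => c) p ∂μ = c * ∫⁻ a, κ a (Prod.mk a ⁻¹' s) ∂ν := by
          rw [lintegral_indicator_const hs, h s hs]
      _ ≤ ∫⁻ a, c * κ a (Prod.mk a ⁻¹' s) ∂ν := lintegral_const_mul_le _ _
      _ = ∫⁻ a, ∫⁻ b, s.indicator (fun _ => c) (a, b) ∂κ a ∂ν := by
          refine lintegral_congr fun a => ?_
          rw [← lintegral_indicator_const (measurable_prodMk_left hs)]
          rfl
  · calc ∫⁻ p, (f + g) p ∂μ = ∫⁻ p, f p ∂μ + ∫⁻ p, g p ∂μ := lintegral_add_left hf _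
      _ ≤ ∫⁻ a, ∫⁻ b, f (a, b) ∂κ a ∂ν + ∫⁻ a, ∫⁻ b, g (a, b) ∂κ a ∂ν := add_le_add hf_le hg_le
      _ ≤ ∫⁻ a, (∫⁻ b, f (a, b) ∂κ a + ∫⁻ b, g (a, b) ∂κ a) ∂ν := le_lintegral_add _ _
      _ = ∫⁻ a, ∫⁻ b, (f + g) (a, b) ∂κ a ∂ν := lintegral_congr fun a =>
          (lintegral_add_left (hf.comp measurable_prodMk_left) _).symm
  · calc ∫⁻ p, ⨆ n, f n p ∂μ = ⨆ n, ∫⁻ p, f n p ∂μ := lintegral_iSup hf hmono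
      _ ≤ ⨆ n, ∫⁻ a, ∫⁻ b, f n (a, b) ∂κ a ∂ν := iSup_mono hf_le
      _ ≤ ∫⁻ a, ∫⁻ b, ⨆ n, f n (a, b) ∂κ a ∂ν := iSup_le fun n =>
          lintegral_mono fun a => lintegral_mono fun b => le_iSup (fun n => f n (a, b)) n

lemma measure_univ_eq (h : IsDisintegration μ ν κ) (hκ : ∀ a, IsProbabilityMeasure (κ a)) :
    μ Set.univ = ν Set.univ := by
  simp [h Set.univ MeasurableSet.univ]

lemma isProbabilityMeasure [IsProbabilityMeasure ν] (h : IsDisintegration μ ν κ)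
    (hκ : ∀ a, IsProbabilityMeasure (κ a)) : IsProbabilityMeasure μ :=
  ⟨by rw [h.measure_univ_eq hκ, measure_univ]⟩

/-- The reverse inequality comes from `lintegral_le` applied to `c - f`. -/
lemma lintegral_eq [IsFiniteMeasure ν] (h : IsDisintegration μ ν κ)
    (hκ : ∀ a, IsProbabilityMeasure (κ a)) {f : α × β → ENNReal} (hf : Measurable f)
    {c : ENNReal} (hc : c ≠ ⊤) (hfc : ∀ p, f p ≤ c) :
    ∫⁻ p, f p ∂μ = ∫⁻ a, ∫⁻ b, f (a, b) ∂κ a ∂ν := by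
  set Φ : α → ENNReal := fun a => ∫⁻ b, f (a, b) ∂κ a
  set T := c * ν Set.univ
  have hT : T ≠ ⊤ := ENNReal.mul_ne_top hc (measure_ne_top _ _)
  have hμ := h.measure_univ_eq hκ
  have hΦc : ∀ a, Φ a ≤ c := fun a => (lintegral_mono fun b => hfc (a, b)).trans (by simp)
  have hfT : ∫⁻ p, f p ∂μ ≤ T := (lintegral_mono hfc).trans (by rw [lintegral_const, hμ])
  have hcompl : T - ∫⁻ p, f p ∂μ ≤ ∫⁻ a, (c - Φ a) ∂ν :=
    calc T - ∫⁻ p, f p ∂μ = ∫⁻ p, (c - f p) ∂μ := by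
          rw [lintegral_sub hf (ne_top_of_le_ne_top hT hfT) (ae_of_all _ hfc), lintegral_const,
            hμ]
      _ ≤ ∫⁻ a, ∫⁻ b, (c - f (a, b)) ∂κ a ∂ν := h.lintegral_le (measurable_const.sub hf)
      _ = ∫⁻ a, (c - Φ a) ∂ν := lintegral_congr fun a => by
          rw [lintegral_sub (g := fun b => f (a, b)) (hf.comp measurable_prodMk_left)
            (ne_top_of_le_ne_top hc (hΦc a)) (ae_of_all _ fun b => hfc (a, b))]
          simp [Φ]
  have htotal : ∫⁻ a, Φ a ∂ν + ∫⁻ a, (c - Φ a) ∂ν ≤ T :=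
    calc ∫⁻ a, Φ a ∂ν + ∫⁻ a, (c - Φ a) ∂ν ≤ ∫⁻ a, (Φ a + (c - Φ a)) ∂ν := le_lintegral_add _ _
      _ = T := by simp_rw [add_tsub_cancel_of_le (hΦc _), lintegral_const, T]
  refine le_antisymm (h.lintegral_le hf)
    (ENNReal.le_of_add_le_add_right (ENNReal.sub_ne_top (b := ∫⁻ p, f p ∂μ) hT) ?_)
  calc ∫⁻ a, Φ a ∂ν + (T - ∫⁻ p, f p ∂μ) ≤ T := (add_le_add le_rfl hcompl).trans htotal
    _ = ∫⁻ p, f p ∂μ + (T - ∫⁻ p, f p ∂μ) := (add_tsub_cancel_of_le hfT).symm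

lemma exists_measurable_le_integral_eq [IsProbabilityMeasure ν] (h : IsDisintegration μ ν κ)
    (hκ : ∀ a, IsProbabilityMeasure (κ a)) {g : α × β → ℝ} (hg : Measurable g) {C : ℝ}
    (hgC : ∀ p, |g p| ≤ C) :
    ∃ ψ : α → ℝ, Measurable ψ ∧ (∀ a, |ψ a| ≤ C) ∧ (∀ a, ψ a ≤ ∫ b, g (a, b) ∂κ a) ∧
      ∫ a, ψ a ∂ν = ∫ p, g p ∂μ := by
  have := h.isProbabilityMeasure hκ
  obtain ⟨a₀⟩ := nonempty_of_isProbabilityMeasure ν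
  obtain ⟨b₀⟩ := nonempty_of_isProbabilityMeasure (κ a₀)
  have hC : 0 ≤ C := (abs_nonneg _).trans (hgC (a₀, b₀))
  set f : α × β → ENNReal := fun p => ENNReal.ofReal (g p + C)
  have hf : Measurable f := (hg.add_const C).ennreal_ofReal
  have hf2C : ∀ p, f p ≤ ENNReal.ofReal (2 * C) := fun p =>
    ENNReal.ofReal_le_ofReal (by linarith [le_abs_self (g p), hgC p])
  set Φ : α → ENNReal := fun a => ∫⁻ b, f (a, b) ∂κ a
  have hΦ2C : ∀ a, Φ a ≤ ENNReal.ofReal (2 * C) := fun a =>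
    (lintegral_mono fun b => hf2C (a, b)).trans (by simp)
  have hΦ : ∀ a, ∫ b, g (a, b) ∂κ a = (Φ a).toReal - C := fun a =>
    integral_eq_toReal_lintegral_ofReal_add_sub (hg.comp measurable_prodMk_left) fun b => hgC _
  obtain ⟨ψ, hψm, hψΦ, hψeq⟩ := exists_measurable_le_lintegral_eq ν Φ
  have hψ2C : ∀ a, ψ a ≤ ENNReal.ofReal (2 * C) := fun a => (hψΦ a).trans (hΦ2C a)
  have hψC : ∀ a, |(ψ a).toReal - C| ≤ C := fun a => by
    have := ENNReal.toReal_le_of_le_ofReal (by positivity) (hψ2C a)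
    rw [abs_le]; constructor <;> linarith [ENNReal.toReal_nonneg (a := ψ a)]
  refine ⟨fun a => (ψ a).toReal - C, hψm.ennreal_toReal.sub_const C, hψC, fun a => ?_, ?_⟩
  · rw [hΦ a]
    exact sub_le_sub_right
      (ENNReal.toReal_mono (ne_top_of_le_ne_top ENNReal.ofReal_ne_top (hΦ2C a)) (hψΦ a)) C
  · have hψfin : ∀ a, ψ a ≠ ⊤ := fun a => ne_top_of_le_ne_top ENNReal.ofReal_ne_top (hψ2C a)
    rw [integral_eq_toReal_lintegral_ofReal_add_sub (hψm.ennreal_toReal.sub_const C) hψC,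
      integral_eq_toReal_lintegral_ofReal_add_sub hg hgC, h.lintegral_eq hκ hf
      ENNReal.ofReal_ne_top hf2C]
    simp only [sub_add_cancel, ENNReal.ofReal_toReal (hψfin _)]
    exact congrArg (fun x => x.toReal - C) hψeq.symm

lemma exists_measurable_ge_integral_eq [IsProbabilityMeasure ν] (h : IsDisintegration μ ν κ)
    (hκ : ∀ a, IsProbabilityMeasure (κ a)) {g : α × β → ℝ} (hg : Measurable g) {C : ℝ}
    (hgC : ∀ p, |g p| ≤ C) :
    ∃ φ : α → ℝ, Measurable φ ∧ (∀ a, |φ a| ≤ C) ∧ (∀ a, ∫ b, g (a, b) ∂κ a ≤ φ a) ∧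
      ∫ a, φ a ∂ν = ∫ p, g p ∂μ := by
  obtain ⟨ψ, hψm, hψC, hψle, hψeq⟩ :=
    h.exists_measurable_le_integral_eq hκ hg.neg (C := C) (by simpa using hgC)
  refine ⟨-ψ, hψm.neg, by simpa using hψC, fun a => ?_, ?_⟩
  · simpa [integral_neg, le_neg] using hψle a
  · simpa [integral_neg] using congrArg Neg.neg hψeq

end IsDisintegration

end Disintegration

theorem integral_sub_integral_le_of_isDisintegration {α β : Type*} [MeasurableSpace α]
    [MeasurableSpace β] {μ₁ μ₂ : Measure (α × β)} {ν₁ ν₂ : Measure α} [IsProbabilityMeasure ν₁]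
    [IsProbabilityMeasure ν₂] {κ₁ κ₂ : α → Measure β} (hκ₁ : ∀ a, IsProbabilityMeasure (κ₁ a))
    (hκ₂ : ∀ a, IsProbabilityMeasure (κ₂ a)) (h₁ : IsDisintegration μ₁ ν₁ κ₁)
    (h₂ : IsDisintegration μ₂ ν₂ κ₂) {g : α × β → ℝ} (hg : Measurable g)
    (hg₁ : ∀ p, |g p| ≤ 1) {ε δ : ℝ}
    (hleaf : ∀ᵐ a ∂ν₂, ∫ b, g (a, b) ∂κ₁ a - ∫ b, g (a, b) ∂κ₂ a ≤ ε)
    (hmarg : ∀ h : α → ℝ, Measurable h → (∀ a, |h a| ≤ 1) →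
      |∫ a, h a ∂ν₁ - ∫ a, h a ∂ν₂| ≤ δ) :
    ∫ p, g p ∂μ₁ - ∫ p, g p ∂μ₂ ≤ ε + δ := by
  obtain ⟨ψ, hψm, hψ₁, hψle, hψeq⟩ := h₁.exists_measurable_le_integral_eq hκ₁ hg hg₁
  obtain ⟨φ, hφm, hφ₁, hφge, hφeq⟩ := h₂.exists_measurable_ge_integral_eq hκ₂ hg hg₁
  have hφint : Integrable φ ν₂ := integrable_of_abs_le hφm hφ₁
  have hleaves : ∫ a, ψ a ∂ν₂ ≤ ∫ a, φ a ∂ν₂ + ε :=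
    calc ∫ a, ψ a ∂ν₂ ≤ ∫ a, (φ a + ε) ∂ν₂ :=
          integral_mono_ae (integrable_of_abs_le hψm hψ₁) (hφint.add (integrable_const ε))
            (hleaf.mono fun a ha => by linarith [hψle a, hφge a])
      _ = ∫ a, φ a ∂ν₂ + ε := by simp [integral_add hφint (integrable_const ε)]
  have hmarginals := (abs_le.1 (hmarg ψ hψm hψ₁)).2
  rw [← hψeq, ← hφeq]
  linarith

lemma II.dist_le_one (x y : II) : dist x y ≤ 1 := by
  obtain ⟨⟨hx₁, hx₂⟩, ⟨hy₁, hy₂⟩⟩ := And.intro x.2 y.2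
  rw [Subtype.dist_eq, Real.dist_eq, abs_le]
  constructor <;> linarith

lemma II.prod_dist_le_one (p q : II × II) : dist p q ≤ 1 :=
  max_le (II.dist_le_one _ _) (II.dist_le_one _ _)

theorem stmt8_general
    (μ1 μ2 : Measure (II × II)) [IsProbabilityMeasure μ1] [IsProbabilityMeasure μ2]
    (μγ1 μγ2 : II → Measure II)
    (hp1 : ∀ γ, IsProbabilityMeasure (μγ1 γ)) (hp2 : ∀ γ, IsProbabilityMeasure (μγ2 γ))
    (μx1 μx2 : Measure II) [IsProbabilityMeasure μx1] [IsProbabilityMeasure μx2]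
    (hac2 : μx2 ≪ volII)
    (hdis1 : ∀ A : Set (II × II), MeasurableSet A →
      μ1 A = ∫⁻ γ, μγ1 γ {y | (γ, y) ∈ A} ∂μx1)
    (hdis2 : ∀ A : Set (II × II), MeasurableSet A →
      μ2 A = ∫⁻ γ, μγ2 γ {y | (γ, y) ∈ A} ∂μx2)
    (ε δ : ℝ)
    (hleaf : ∀ᵐ γ ∂volII, W1 (μγ1 γ) (μγ2 γ) ≤ ε)
    (hmarg : ∀ h : II → ℝ, Measurable h → (∀ γ, |h γ| ≤ 1) →
      |(∫ γ, h γ ∂μx1) - ∫ γ, h γ ∂μx2| ≤ δ) :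
    W1 μ1 μ2 ≤ ε + δ := by
  let o : II := ⟨0, by norm_num⟩
  refine W1_le_of_forall_integral_sub_le (o, o) fun g hg hgo => ?_
  have hg₁ : ∀ p, |g p| ≤ 1 := fun p => by
    simpa [hgo, Real.dist_eq] using
      (hg.dist_le_mul p (o, o)).trans (by simpa using II.prod_dist_le_one p (o, o))
  refine integral_sub_integral_le_of_isDisintegration hp1 hp2 hdis1 hdis2 hg.continuous.measurable
    hg₁ ?_ hmarg
  filter_upwards [hac2.ae_le hleaf] with γ hγ
  have hleafg : LipschitzWith 1 fun y => g (γ, y) := .of_dist_le_mul fun y z =>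
    (hg.dist_le_mul _ _).trans_eq (by simp [Prod.dist_eq])
  exact (integral_sub_integral_le_W1 hleafg).trans hγ

/-- Estimate of the Wasserstein distance between two disintegrated measures on
`Σ = I × I` in terms of the distances on the vertical leaves and the marginals. -/
theorem stmt8
    (μ1 μ2 : Measure (II × II)) [IsProbabilityMeasure μ1] [IsProbabilityMeasure μ2]
    (μγ1 μγ2 : II → Measure II)
    (hp1 : ∀ γ, IsProbabilityMeasure (μγ1 γ)) (hp2 : ∀ γ, IsProbabilityMeasure (μγ2 γ))
    (μx1 μx2 : Measure II) [IsProbabilityMeasure μx1] [IsProbabilityMeasure μx2]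
    (hac1 : μx1 ≪ volII) (hac2 : μx2 ≪ volII)
    (hdis1 : ∀ A : Set (II × II), MeasurableSet A →
      μ1 A = ∫⁻ γ, μγ1 γ {y | (γ, y) ∈ A} ∂μx1)
    (hdis2 : ∀ A : Set (II × II), MeasurableSet A →
      μ2 A = ∫⁻ γ, μγ2 γ {y | (γ, y) ∈ A} ∂μx2)
    (ε δ : ℝ)
    (hleaf : ∀ᵐ γ ∂volII, W1 (μγ1 γ) (μγ2 γ) ≤ ε)
    (hmarg : ∀ h : II → ℝ, Measurable h → (∀ γ, |h γ| ≤ 1) →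
      |(∫ γ, h γ ∂μx1) - ∫ γ, h γ ∂μx2| ≤ δ) :
    W1 μ1 μ2 ≤ ε + δ :=
  stmt8_general μ1 μ2 μγ1 μγ2 hp1 hp2 μx1 μx2 hac2 hdis1 hdis2 ε δ hleaf hmarg
end

section
/- Let μ_n be a sequence of Borel probability measures on Σ = I × I, each K-good (i.e., the leaf-restriction map γ ↦ μ_n|_γ from I to the space of finite measures on I with the W₁⁰ metric has total variation at most K). Let f : Σ → ℝ be ℓ-Lipschitz with ‖f‖_∞ ≤ ℓ, and ν_n = f·μ_n. Then each ν_n is (3ℓK + ℓ)-good. -/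
open MeasureTheory

/-- The modified Wasserstein distance on finite measures on `I`, using test functions
that are `1`-Lipschitz with sup norm at most `1`. -/
noncomputable def W10 (μ ν : Measure II) : ℝ :=
  sSup {x : ℝ | ∃ g : II → ℝ, LipschitzWith 1 g ∧ (∀ y, |g y| ≤ 1) ∧
    x = |∫ y, g y ∂μ - ∫ y, g y ∂ν|}

/-- The map `γ ↦ G γ` (leaf restrictions) has total variation at most `K` with respect
to the `W₁⁰` metric. -/
def VarLe (K : ℝ) (G : II → Measure II) : Prop :=
  ∀ (n : ℕ) (x : ℕ → II), Monotone x →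
    ∑ i ∈ Finset.range n, W10 (G (x i)) (G (x (i + 1))) ≤ K

/-!
On a leaf `γ`, `ν|_γ = f(γ, ·) μ|_γ`. For a test function `g`, the product `f(γ, ·) g` is
`2ℓ`-Lipschitz and bounded by `ℓ`, so moving it from `μ|_γ` to `μ|_γ'` costs at most
`2ℓ W₁⁰(μ|_γ, μ|_γ')`, while replacing `f(γ, ·)` by `f(γ', ·)` costs at most
`ℓ |γ - γ'| μ|_γ'(I) ≤ ℓ (1 + K) |γ - γ'|`: the leaf masses vary by at most `K` and average to `1`.
Summing over a partition of `I` gives `2ℓK + ℓ(1 + K)`.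
-/

open Set

instance : IsProbabilityMeasure volII := by
  constructor
  rw [volII, MeasurableEmbedding.comap_apply (MeasurableEmbedding.subtype_coe measurableSet_Icc),
    image_univ, Subtype.range_val, Real.volume_Icc]
  norm_num

lemma LipschitzWith.mul_of_abs_le {α : Type*} [PseudoMetricSpace α] {f g : α → ℝ}
    {Kf Kg Cf Cg : NNReal} (hf : LipschitzWith Kf f) (hg : LipschitzWith Kg g)
    (hf_bdd : ∀ x, |f x| ≤ Cf) (hg_bdd : ∀ x, |g x| ≤ Cg) :
    LipschitzWith (Cf * Kg + Cg * Kf) fun x => f x * g x := by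
  refine LipschitzWith.of_dist_le_mul fun a b => ?_
  have hf_ab := hf.dist_le_mul a b
  have hg_ab := hg.dist_le_mul a b
  rw [Real.dist_eq] at hf_ab hg_ab ⊢
  calc |f a * g a - f b * g b| = |f a * (g a - g b) + g b * (f a - f b)| := by ring_nf
    _ ≤ |f a| * |g a - g b| + |g b| * |f a - f b| := by
      rw [← abs_mul, ← abs_mul]; exact abs_add_le _ _
    _ ≤ Cf * (Kg * dist a b) + Cg * (Kf * dist a b) := by
      gcongr
      exacts [hf_bdd a, hg_bdd b]
    _ = ↑(Cf * Kg + Cg * Kf) * dist a b := by push_cast; ring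

lemma integral_withDensity_ofReal {α : Type*} [MeasurableSpace α] {m : Measure α}
    {φ : α → ℝ} (hφ : Measurable φ) (hφ_nonneg : ∀ x, 0 ≤ φ x) (g : α → ℝ) :
    ∫ x, g x ∂m.withDensity (fun x => ENNReal.ofReal (φ x)) = ∫ x, φ x * g x ∂m := by
  rw [integral_withDensity_eq_integral_toReal_smul hφ.ennreal_ofReal
    (ae_of_all _ fun _ => ENNReal.ofReal_lt_top)]
  simp only [ENNReal.toReal_ofReal (hφ_nonneg _), smul_eq_mul]

section W10

lemma W10_comm (μ ν : Measure II) : W10 μ ν = W10 ν μ := by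
  simp only [W10, abs_sub_comm (∫ y, _ ∂μ)]

lemma W10_le {μ ν : Measure II} {B : ℝ}
    (h : ∀ g : II → ℝ, LipschitzWith 1 g → (∀ y, |g y| ≤ 1) → |∫ y, g y ∂μ - ∫ y, g y ∂ν| ≤ B) :
    W10 μ ν ≤ B := by
  refine csSup_le ⟨0, 0, LipschitzWith.const' 0, by simp, by simp⟩ ?_
  rintro _ ⟨g, hg, hg_bdd, rfl⟩
  exact h g hg hg_bdd

variable {μ ν : Measure II} [IsFiniteMeasure μ] [IsFiniteMeasure ν]

lemma le_W10 {g : II → ℝ} (hg : LipschitzWith 1 g) (hg_bdd : ∀ y, |g y| ≤ 1) :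
    |∫ y, g y ∂μ - ∫ y, g y ∂ν| ≤ W10 μ ν := by
  refine le_csSup ⟨μ.real univ + ν.real univ, ?_⟩ ⟨g, hg, hg_bdd, rfl⟩
  rintro _ ⟨g, -, hg_bdd, rfl⟩
  have hbound (ρ : Measure II) [IsFiniteMeasure ρ] : |∫ y, g y ∂ρ| ≤ ρ.real univ := by
    simpa using norm_integral_le_of_norm_le_const (μ := ρ) (f := g) (C := 1)
      (ae_of_all _ fun y => by simpa using hg_bdd y)
  exact (abs_sub _ _).trans (add_le_add (hbound μ) (hbound ν))

lemma abs_integral_sub_le_mul_W10 {h : II → ℝ} {c : NNReal} (hh : LipschitzWith c h)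
    (hh_bdd : ∀ y, |h y| ≤ c) :
    |∫ y, h y ∂μ - ∫ y, h y ∂ν| ≤ c * W10 μ ν := by
  rcases eq_or_ne c 0 with rfl | hc
  · have : h = 0 := funext fun y => abs_nonpos_iff.mp (by simpa using hh_bdd y)
    simp [this]
  have hc' : (0 : ℝ) < c := by positivity
  have hg : LipschitzWith 1 fun y => (c : ℝ)⁻¹ * h y := .of_dist_le_mul fun a b => by
    rw [Real.dist_eq, ← mul_sub, abs_mul, abs_inv, NNReal.abs_eq, inv_mul_le_iff₀ hc']
    simpa [Real.dist_eq] using hh.dist_le_mul a b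
  have hg_bdd (y : II) : |(c : ℝ)⁻¹ * h y| ≤ 1 := by
    rw [abs_mul, abs_inv, NNReal.abs_eq, inv_mul_le_one₀ hc']
    exact hh_bdd y
  have := le_W10 (μ := μ) (ν := ν) hg hg_bdd
  rwa [integral_const_mul, integral_const_mul, ← mul_sub, abs_mul, abs_inv, NNReal.abs_eq,
    inv_mul_le_iff₀ hc'] at this

lemma abs_measureReal_univ_sub_le_W10 : |μ.real univ - ν.real univ| ≤ W10 μ ν := by
  simpa using le_W10 (μ := μ) (ν := ν) (LipschitzWith.const' (1 : ℝ)) (by simp)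

end W10

lemma W10_withDensity_le {μ ν : Measure II} [IsFiniteMeasure μ] [IsFiniteMeasure ν]
    {φ ψ : II → ℝ} {ℓ : NNReal} {δ : ℝ} (hφ : LipschitzWith ℓ φ) (hφ_bdd : ∀ y, |φ y| ≤ ℓ)
    (hφ_nonneg : ∀ y, 0 ≤ φ y) (hψ : Continuous ψ) (hψ_nonneg : ∀ y, 0 ≤ ψ y)
    (hφψ : ∀ y, |φ y - ψ y| ≤ δ) :
    W10 (μ.withDensity fun y => ENNReal.ofReal (φ y))
        (ν.withDensity fun y => ENNReal.ofReal (ψ y)) ≤ 2 * ℓ * W10 μ ν + δ * ν.real univ := by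
  refine W10_le fun g hg hg_bdd => ?_
  rw [integral_withDensity_ofReal hφ.continuous.measurable hφ_nonneg,
    integral_withDensity_ofReal hψ.measurable hψ_nonneg]
  have hφg : LipschitzWith (2 * ℓ) fun y => φ y * g y := by
    have := hφ.mul_of_abs_le hg hφ_bdd (Cg := 1) (by simpa using hg_bdd)
    rwa [show ℓ * 1 + 1 * ℓ = 2 * ℓ by ring] at this
  have hφg_bdd (y : II) : |φ y * g y| ≤ ↑(2 * ℓ) := by
    rw [abs_mul, NNReal.coe_mul, NNReal.coe_ofNat]
    nlinarith [hφ_bdd y, hg_bdd y, abs_nonneg (φ y), abs_nonneg (g y)]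
  have hint {χ : II → ℝ} (hχ : Continuous χ) : Integrable (fun y => χ y * g y) ν :=
    (hχ.mul hg.continuous).integrable_of_hasCompactSupport (.of_compactSpace _)
  have hsplit : ∫ y, φ y * g y ∂μ - ∫ y, ψ y * g y ∂ν =
      (∫ y, φ y * g y ∂μ - ∫ y, φ y * g y ∂ν) + ∫ y, (φ y - ψ y) * g y ∂ν := by
    simp_rw [sub_mul]
    rw [integral_sub (hint hφ.continuous) (hint hψ)]
    ring
  have hsecond : |∫ y, (φ y - ψ y) * g y ∂ν| ≤ δ * ν.real univ := by
    refine (Real.norm_eq_abs _).symm.trans_le (norm_integral_le_of_norm_le_const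
      (ae_of_all _ fun y => ?_))
    rw [Real.norm_eq_abs, abs_mul]
    nlinarith [hφψ y, hg_bdd y, abs_nonneg (φ y - ψ y), abs_nonneg (g y)]
  calc _ ≤ |∫ y, φ y * g y ∂μ - ∫ y, φ y * g y ∂ν| + |∫ y, (φ y - ψ y) * g y ∂ν| :=
        hsplit ▸ abs_add_le _ _
    _ ≤ 2 * ℓ * W10 μ ν + δ * ν.real univ := by
        gcongr
        simpa using abs_integral_sub_le_mul_W10 hφg hφg_bdd

namespace VarLe

variable {K : ℝ} {G : II → Measure II}

lemma nonneg (hG : VarLe K G) : 0 ≤ K := by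
  simpa using hG 0 (fun _ => ⟨0, by norm_num, by norm_num⟩) monotone_const

lemma W10_le (hG : VarLe K G) (a b : II) : W10 (G a) (G b) ≤ K := by
  wlog hab : a ≤ b generalizing a b
  · rw [W10_comm]
    exact this b a (le_of_not_ge hab)
  have hx : Monotone fun i : ℕ => if i = 0 then a else b :=
    monotone_nat_of_le_succ fun i => by split_ifs <;> simp_all
  simpa using hG 1 _ hx

lemma measureReal_univ_le [∀ γ, IsFiniteMeasure (G γ)] (hG : VarLe K G)
    (hmass : ∫⁻ γ, G γ univ ∂volII = 1) (γ : II) : (G γ).real univ ≤ 1 + K := by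
  have hlower (γ' : II) : ENNReal.ofReal ((G γ).real univ - K) ≤ G γ' univ := by
    refine ENNReal.ofReal_le_of_le_toReal ?_
    have := (abs_measureReal_univ_sub_le_W10 (μ := G γ) (ν := G γ')).trans (hG.W10_le γ γ')
    simp only [measureReal_def] at this ⊢
    linarith [(abs_le.mp this).2]
  have : ENNReal.ofReal ((G γ).real univ - K) ≤ 1 :=
    calc _ = ∫⁻ _, ENNReal.ofReal ((G γ).real univ - K) ∂volII := by simp
      _ ≤ ∫⁻ γ', G γ' univ ∂volII := lintegral_mono hlower
      _ = 1 := hmass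
  linarith [ENNReal.ofReal_le_one.mp this]

lemma of_W10_le {H : II → Measure II} {A B : ℝ} (hG : VarLe K G) (hA : 0 ≤ A) (hB : 0 ≤ B)
    (h : ∀ a b, W10 (H a) (H b) ≤ A * W10 (G a) (G b) + B * dist a b) :
    VarLe (A * K + B) H := by
  intro n x hx
  have hdist : ∑ i ∈ Finset.range n, dist (x i) (x (i + 1)) ≤ 1 := by
    have (i : ℕ) : dist (x i) (x (i + 1)) = (x (i + 1) : ℝ) - (x i : ℝ) := by
      rw [Subtype.dist_eq, Real.dist_eq, abs_sub_comm,
        abs_of_nonneg (sub_nonneg.mpr (Subtype.coe_le_coe.mpr (hx i.le_succ)))]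
    rw [Finset.sum_congr rfl fun i _ => this i, Finset.sum_range_sub (fun i => (x i : ℝ))]
    linarith [(x n).2.2, (x 0).2.1]
  calc _ ≤ ∑ i ∈ Finset.range n, (A * W10 (G (x i)) (G (x (i + 1))) + B * dist (x i) (x (i + 1))) :=
        Finset.sum_le_sum fun i _ => h _ _
    _ = A * ∑ i ∈ Finset.range n, W10 (G (x i)) (G (x (i + 1))) +
          B * ∑ i ∈ Finset.range n, dist (x i) (x (i + 1)) := by
        rw [Finset.sum_add_distrib, Finset.mul_sum, Finset.mul_sum]
    _ ≤ A * K + B * 1 := by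
        gcongr
        exact hG n x hx
    _ = A * K + B := by ring

end VarLe

theorem stmt17_general (K : ℝ) (ℓ : NNReal)
    (μ : ℕ → Measure (II × II)) (hprob : ∀ n, IsProbabilityMeasure (μ n))
    (G : ℕ → II → Measure II) (hfin : ∀ n γ, IsFiniteMeasure (G n γ))
    (hdis : ∀ n, ∀ A : Set (II × II), MeasurableSet A →
      μ n A = ∫⁻ γ, G n γ {y | (γ, y) ∈ A} ∂volII)
    (hgood : ∀ n, VarLe K (G n))
    (f : II × II → ℝ) (hf_lip : LipschitzWith ℓ f)
    (hf_nonneg : ∀ p, 0 ≤ f p) (hf_bdd : ∀ p, |f p| ≤ (ℓ : ℝ))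
    (Gν : ℕ → II → Measure II)
    (hGν : ∀ n γ, Gν n γ = (G n γ).withDensity (fun y => ENNReal.ofReal (f (γ, y)))) :
    ∀ n, VarLe (3 * (ℓ : ℝ) * K + (ℓ : ℝ)) (Gν n) := by
  intro n
  have hK := (hgood n).nonneg
  have hmass (γ : II) : (G n γ).real univ ≤ 1 + K :=
    (hgood n).measureReal_univ_le (by simpa using (hdis n univ .univ).symm) γ
  have hf_leaf (a : II) : LipschitzWith ℓ fun y => f (a, y) := by
    simpa [Function.comp_def] using hf_lip.comp (LipschitzWith.prodMk_left a)
  have hf_across (a b y : II) : |f (a, y) - f (b, y)| ≤ ℓ * dist a b := by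
    simpa [Real.dist_eq] using (hf_lip.comp (LipschitzWith.prodMk_right y)).dist_le_mul a b
  rw [show 3 * (ℓ : ℝ) * K + ℓ = 2 * ℓ * K + ℓ * (1 + K) by ring]
  refine (hgood n).of_W10_le (by positivity) (by positivity) fun a b => ?_
  rw [hGν, hGν]
  calc _ ≤ 2 * ℓ * W10 (G n a) (G n b) + ℓ * dist a b * (G n b).real univ :=
        W10_withDensity_le (hf_leaf a) (fun _ => hf_bdd _) (fun _ => hf_nonneg _)
          (hf_leaf b).continuous (fun _ => hf_nonneg _) (hf_across a b)
    _ ≤ 2 * ℓ * W10 (G n a) (G n b) + ℓ * (1 + K) * dist a b := by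
        rw [mul_right_comm (ℓ : ℝ)]
        gcongr
        exact hmass b

/-- Lemma 8.10: if each `μ_n` is a `K`-good probability measure on `Σ = I × I` and
`f` is `ℓ`-Lipschitz with `‖f‖_∞ ≤ ℓ`, then each `ν_n = f·μ_n` is `(3ℓK + ℓ)`-good. -/
theorem stmt17 (K : ℝ) (hK : 0 ≤ K) (ℓ : NNReal)
    (μ : ℕ → Measure (II × II)) (hprob : ∀ n, IsProbabilityMeasure (μ n))
    (G : ℕ → II → Measure II) (hfin : ∀ n γ, IsFiniteMeasure (G n γ))
    (hdis : ∀ n, ∀ A : Set (II × II), MeasurableSet A →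
      μ n A = ∫⁻ γ, G n γ {y | (γ, y) ∈ A} ∂volII)
    (hgood : ∀ n, VarLe K (G n))
    (f : II × II → ℝ) (hf_lip : LipschitzWith ℓ f)
    (hf_nonneg : ∀ p, 0 ≤ f p) (hf_bdd : ∀ p, |f p| ≤ (ℓ : ℝ))
    (ν : ℕ → Measure (II × II))
    (hν : ∀ n, ν n = (μ n).withDensity (fun p => ENNReal.ofReal (f p)))
    (Gν : ℕ → II → Measure II)
    (hGν : ∀ n γ, Gν n γ = (G n γ).withDensity (fun y => ENNReal.ofReal (f (γ, y)))) :
    ∀ n, VarLe (3 * (ℓ : ℝ) * K + (ℓ : ℝ)) (Gν n) :=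
  stmt17_general K ℓ μ hprob G hfin hdis hgood f hf_lip hf_nonneg hf_bdd Gν hGν
end
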